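/- Let n ≥ 5 and let G be a finite group. If f : Bₙ → G is a homomorphism that is not cyclic (i.e., does not factor through the abelianization Bₙ → ℤ), then |G| ≥ 2^{⌊n/2⌋-1} · (⌊n/2⌋)!. -/

import Mathlib

open FreeGroup in
/-- The braid relations on the generators `σ₁, …, σ_{n-1}` (indexed by `Fin (n-1)`, with index
`k` corresponding to `σ_{k+1}`): `σᵢσⱼ = σⱼσᵢ` for `|i - j| ≥ 2` and
`σᵢσ_{i+1}σᵢ = σ_{i+1}σᵢσ_{i+1}`. -/
def braidRels (n : ℕ) : Set (FreeGroup (Fin (n - 1))) :=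
  {r | (∃ i j : Fin (n - 1), (i : ℕ) + 2 ≤ (j : ℕ) ∧
          r = of i * of j * (of i)⁻¹ * (of j)⁻¹) ∨
       (∃ i j : Fin (n - 1), (i : ℕ) + 1 = (j : ℕ) ∧
          r = of i * of j * of i * (of j * of i * of j)⁻¹)}

/-- The braid group `Bₙ` on `n` strands, as the group presented by the Artin generators and
the braid relations. -/
def BraidGroup (n : ℕ) : Type := PresentedGroup (braidRels n)

instance (n : ℕ) : Group (BraidGroup n) :=
  inferInstanceAs (Group (PresentedGroup (braidRels n)))

/-- `braidGen n k` is the Artin generator `σ_{k+1}` of `Bₙ`. -/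
def braidGen (n : ℕ) (k : Fin (n - 1)) : BraidGroup n := PresentedGroup.of k

/-- The abelianization homomorphism `ν : Bₙ → ℤ` (signed word length), sending each
generator `σᵢ` to `1`. -/
def braidAbel (n : ℕ) : BraidGroup n →* Multiplicative ℤ :=
  PresentedGroup.toGroup (f := fun _ : Fin (n - 1) => Multiplicative.ofAdd (1 : ℤ)) (by
    rintro r (⟨i, j, hij, rfl⟩ | ⟨i, j, hij, rfl⟩) <;> simp <;> group)

section Aux
variable {G : Type*} [Group G]

private lemma braid_swap_conj (a b c : G)
    (h1 : a * b * a = b * a * b) (h2 : b * c * b = c * b * c) (h3 : a * c = c * a) :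
    ((b*a*c*b) * a * (b*a*c*b)⁻¹ = c) ∧ ((b*a*c*b) * c * (b*a*c*b)⁻¹ = a) := by
  have h1' : a*(b*a) = b*(a*b) := by simpa [mul_assoc] using h1
  have h2' : b*(c*b) = c*(b*c) := by simpa [mul_assoc] using h2
  have h3X : ∀ X:G, a*(c*X) = c*(a*X) := fun X => by rw [← mul_assoc, h3, mul_assoc]
  have h1X : ∀ X:G, a*(b*(a*X)) = b*(a*(b*X)) := fun X => by
    rw [← mul_assoc, ← mul_assoc, h1, mul_assoc, mul_assoc]
  have h2X : ∀ X:G, b*(c*(b*X)) = c*(b*(c*X)) := fun X => by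
    rw [← mul_assoc, ← mul_assoc, h2, mul_assoc, mul_assoc]
  constructor
  · rw [mul_inv_eq_iff_eq_mul]
    simp only [mul_assoc]
    rw [h3X, h1', h2X, ← h3X]
  · rw [mul_inv_eq_iff_eq_mul]
    simp only [mul_assoc]
    rw [← h2', ← h1X]
end Aux
private lemma noncommProd_image_perm {G : Type*} [Group G] {m : ℕ} (x : Fin m → G)
    (hc : ∀ i j, Commute (x i) (x j)) (π : Equiv.Perm (Fin m)) (S : Finset (Fin m)) :
    (S.image π).noncommProd x (fun a _ b _ _ => hc a b) =
      S.noncommProd (fun i => x (π i)) (fun a _ b _ _ => hc _ _) := by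
  classical
  induction S using Finset.induction_on with
  | empty => simp; rfl
  | @insert a s ha ih =>
    have hna : π a ∉ s.image π := by
      simp only [Finset.mem_image]
      rintro ⟨b, hb, hπ⟩
      exact ha ((π.injective hπ) ▸ hb)
    rw [Finset.image_insert]
    exact (Finset.noncommProd_insert_of_notMem _ _ _ _ hna).trans
      ((congrArg (x (π a) * ·) ih).trans (Finset.noncommProd_insert_of_notMem s a (fun i => x (π i)) _ ha).symm)

private lemma totally_symmetric_card {G : Type*} [Group G] [Finite G] {k : ℕ}
    (x : Fin (k+1) → G)
    (hc : ∀ i j, Commute (x i) (x j)) (hinj : Function.Injective x)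
    (hperm : ∀ π : Equiv.Perm (Fin (k+1)), ∃ g : G, ∀ p, g * x p * g⁻¹ = x (π p)) :
    2 ^ k * Nat.factorial (k+1) ≤ Nat.card G := by
  classical
  choose gg hgg using hperm
  set U : Finset (Fin (k+1)) → G := fun S => S.noncommProd x (fun a _ b _ _ => hc a b) with hU
  have hins : ∀ (a : Fin (k+1)) (s : Finset (Fin (k+1))), a ∉ s →
      U (insert a s) = x a * U s := fun a s ha =>
    Finset.noncommProd_insert_of_notMem s a x _ ha
  have hconj : ∀ (π : Equiv.Perm (Fin (k+1))) (S : Finset (Fin (k+1))),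
      gg π * U S * (gg π)⁻¹ = U (S.image π) := by
    intro π S
    have h1 := Finset.map_noncommProd S x (fun a _ b _ _ => hc a b) (MulAut.conj (gg π)).toMonoidHom
    simp only [MulAut.conj_apply, MulEquiv.coe_toMonoidHom] at h1
    rw [hU]; simp only
    rw [h1, noncommProd_image_perm x hc π S]
    exact Finset.noncommProd_congr rfl (fun i _ => (hgg π i)) _
  have hcomU : ∀ (S : Finset (Fin (k+1))) (p : Fin (k+1)), Commute (x p) (U S) := by
    intro S p
    exact Finset.noncommProd_commute S x _ (x p) (fun i _ => hc p i)
  -- key distinctness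
  have core : ∀ P Q : Finset (Fin (k+1)), Disjoint P Q → Fin.last k ∉ P → Fin.last k ∉ Q →
      U P = U Q → ∀ j, j ∈ P → False := by
    intro P Q hd hlP hlQ hUeq j hj
    set π := Equiv.swap j (Fin.last k) with hπ
    have hjQ : j ∉ Q := (Finset.disjoint_left.mp hd) hj
    have hjlast : j ≠ Fin.last k := fun h => hlP (h ▸ hj)
    have hQfix : Q.image π = Q := by
      rw [Finset.image_congr (g := id) ?_, Finset.image_id]
      intro z hz
      exact Equiv.swap_apply_of_ne_of_ne (fun h => hjQ (h ▸ hz)) (fun h => hlQ (h ▸ hz))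
    have hPim : P.image π = insert (Fin.last k) (P.erase j) := by
      nth_rewrite 1 [← Finset.insert_erase hj]
      rw [Finset.image_insert]
      congr 1
      · rw [hπ]; simp [Equiv.swap_apply_left]
      · rw [Finset.image_congr (g := id) ?_, Finset.image_id]
        intro z hz
        simp only [Finset.mem_coe, Finset.mem_erase] at hz
        exact Equiv.swap_apply_of_ne_of_ne hz.1 (fun h => hlP (h ▸ hz.2))
    have e : U (P.image π) = U (Q.image π) := by rw [← hconj, ← hconj, hUeq]
    rw [hQfix, hPim, ← hUeq] at e
    rw [hins (Fin.last k) (P.erase j) (fun h => hlP (Finset.mem_of_mem_erase h))] at e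
    nth_rewrite 2 [← Finset.insert_erase hj] at e
    rw [hins j (P.erase j) (Finset.notMem_erase _ _)] at e
    have : Fin.last k = j := hinj (mul_right_cancel e)
    exact hjlast this.symm
  have key : ∀ P Q : Finset (Fin (k+1)), Disjoint P Q → Fin.last k ∉ P → Fin.last k ∉ Q →
      U P = U Q → P = Q := by
    intro P Q hd hlP hlQ hUeq
    rcases Finset.eq_empty_or_nonempty P with hP | ⟨j, hj⟩
    · rcases Finset.eq_empty_or_nonempty Q with hQ | ⟨j, hj⟩
      · rw [hP, hQ]
      · exact (core Q P hd.symm hlQ hlP hUeq.symm j hj).elim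
    · exact (core P Q hd hlP hlQ hUeq j hj).elim
  -- the injection
  set F : Equiv.Perm (Fin (k+1)) × Finset (Fin k) → G :=
    fun z => gg z.1 * U (z.2.map Fin.castSuccEmb) with hF
  have hlastnot : ∀ S : Finset (Fin k), Fin.last k ∉ S.map Fin.castSuccEmb := by
    intro S h
    rw [Finset.mem_map] at h
    obtain ⟨b, _, hb⟩ := h
    exact (Fin.castSucc_lt_last b).ne (by exact hb)
  have hFinj : Function.Injective F := by
    rintro ⟨π, S⟩ ⟨ρ, T⟩ hST
    simp only [hF] at hST
    set S' := S.map Fin.castSuccEmb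
    set T' := T.map Fin.castSuccEmb
    have hcU : ∀ p, (U T' * (U S')⁻¹) * x p * (U T' * (U S')⁻¹)⁻¹ = x p := by
      intro p
      have : Commute (U T' * (U S')⁻¹) (x p) :=
        Commute.mul_left (hcomU T' p).symm ((hcomU S' p).symm.inv_left)
      rw [this.eq]; group
    have hπρ : π = ρ := by
      apply Equiv.ext; intro p
      apply hinj
      have hg : gg π = gg ρ * (U T' * (U S')⁻¹) := by
        rw [← mul_assoc, ← hST]; group
      rw [← hgg π p, ← hgg ρ p, hg]
      have := hcU p
      calc (gg ρ * (U T' * (U S')⁻¹)) * x p * (gg ρ * (U T' * (U S')⁻¹))⁻¹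
          = gg ρ * ((U T' * (U S')⁻¹) * x p * (U T' * (U S')⁻¹)⁻¹) * (gg ρ)⁻¹ := by group
        _ = gg ρ * x p * (gg ρ)⁻¹ := by exact congrArg (fun y => gg ρ * y * (gg ρ)⁻¹) this
    subst hπρ
    have hUST : U S' = U T' := mul_left_cancel hST
    -- split into sdiff parts
    have hS : U (S' \ T') * U (S' ∩ T') = U (T' \ S') * U (T' ∩ S') := by
      rw [← Finset.noncommProd_union_of_disjoint (Finset.disjoint_sdiff_inter S' T') x
          (fun a _ b _ _ => hc a b),
        ← Finset.noncommProd_union_of_disjoint (Finset.disjoint_sdiff_inter T' S') x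
          (fun a _ b _ _ => hc a b)]
      have e1 : S' \ T' ∪ S' ∩ T' = S' := Finset.sdiff_union_inter S' T'
      have e2 : T' \ S' ∪ T' ∩ S' = T' := Finset.sdiff_union_inter T' S'
      calc _ = U S' := Finset.noncommProd_congr e1 (fun _ _ => rfl) _
        _ = U T' := hUST
        _ = _ := (Finset.noncommProd_congr e2 (fun _ _ => rfl) _).symm
    rw [Finset.inter_comm T' S'] at hS
    have hsd : U (S' \ T') = U (T' \ S') := mul_right_cancel hS
    have := key (S' \ T') (T' \ S') (disjoint_sdiff_sdiff)
      (fun h => hlastnot S (Finset.sdiff_subset h))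
      (fun h => hlastnot T (Finset.sdiff_subset h)) hsd
    have hST' : S' = T' := by
      have hd2 : Disjoint (S' \ T') (T' \ S') := disjoint_sdiff_sdiff
      rw [this] at hd2
      have h2 : T' \ S' = ∅ := by simpa using disjoint_self.mp hd2
      have h1 : S' \ T' = ∅ := by rw [this, h2]
      have := Finset.sdiff_eq_empty_iff_subset.mp h1
      have := Finset.sdiff_eq_empty_iff_subset.mp h2
      exact Finset.Subset.antisymm ‹S' ⊆ T'› ‹T' ⊆ S'›
    have : S = T := Finset.map_injective _ hST'
    simp [this]
  have hcard := Nat.card_le_card_of_injective F hFinj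
  calc 2 ^ k * Nat.factorial (k+1)
      = Nat.card (Equiv.Perm (Fin (k+1)) × Finset (Fin k)) := by
        simp [Nat.card_eq_fintype_card, Fintype.card_prod, Fintype.card_perm,
          Fintype.card_finset, Fintype.card_fin, Nat.mul_comm]
    _ ≤ Nat.card G := hcard

private lemma braidRel_eq_one {n : ℕ} {r : FreeGroup (Fin (n-1))} (hr : r ∈ braidRels n) :
    PresentedGroup.mk (braidRels n) r = 1 :=
  (QuotientGroup.eq_one_iff _).mpr (Subgroup.subset_normalClosure hr)

private lemma braid_comm_rel {n : ℕ} (i j : Fin (n-1)) (h : (i:ℕ) + 2 ≤ (j:ℕ)) :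
    braidGen n i * braidGen n j = braidGen n j * braidGen n i := by
  have h1 := braidRel_eq_one (n := n) (Or.inl ⟨i, j, h, rfl⟩)
  simp only [map_mul, map_inv] at h1
  have h2 : braidGen n i * braidGen n j * (braidGen n i)⁻¹ * (braidGen n j)⁻¹ = 1 := h1
  have h3 : braidGen n i * braidGen n j * (braidGen n i)⁻¹ = braidGen n j := mul_inv_eq_one.mp h2
  rwa [mul_inv_eq_iff_eq_mul] at h3

private lemma braid_braid_rel {n : ℕ} (i j : Fin (n-1)) (h : (i:ℕ) + 1 = (j:ℕ)) :
    braidGen n i * braidGen n j * braidGen n i = braidGen n j * braidGen n i * braidGen n j := by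
  have h1 := braidRel_eq_one (n := n) (Or.inr ⟨i, j, h, rfl⟩)
  simp only [map_mul, map_inv] at h1
  have : (braidGen n i * braidGen n j * braidGen n i) *
      (braidGen n j * braidGen n i * braidGen n j)⁻¹ = 1 := h1
  rw [mul_inv_eq_one] at this
  exact this

private lemma braidGroup_hom_ext {n : ℕ} {H : Type*} [Group H] (f g : BraidGroup n →* H)
    (h : ∀ k, f (braidGen n k) = g (braidGen n k)) : f = g :=
  PresentedGroup.ext h

private lemma braidAbel_gen {n : ℕ} (k : Fin (n-1)) :
    braidAbel n (braidGen n k) = Multiplicative.ofAdd (1 : ℤ) :=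
  PresentedGroup.toGroup.of _


/-- If `n ≥ 5`, `G` is a finite group, and `f : Bₙ → G` is a homomorphism that is not cyclic
(i.e. does not factor through the abelianization `ν : Bₙ → ℤ`), then
`|G| ≥ 2^(⌊n/2⌋-1) · ⌊n/2⌋!`. -/
theorem card_ge_of_noncyclic (n : ℕ) (hn : 5 ≤ n) (G : Type*) [Group G] [Finite G]
    (f : BraidGroup n →* G)
    (hf : ¬∃ φ : Multiplicative ℤ →* G, ∀ x, f x = φ (braidAbel n x)) :
    2 ^ (n / 2 - 1) * Nat.factorial (n / 2) ≤ Nat.card G := by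
  classical
  set a : ℕ → G := fun k => if h : k < n - 1 then f (braidGen n ⟨k, h⟩) else 1 with ha
  have haval : ∀ (k : ℕ) (h : k < n - 1), a k = f (braidGen n ⟨k, h⟩) := fun k h => by
    simp [ha, h]
  have hcomm : ∀ k l, k + 2 ≤ l → l < n - 1 → a k * a l = a l * a k := by
    intro k l h hl
    have hk : k < n - 1 := by omega
    rw [haval k hk, haval l hl, ← map_mul, ← map_mul,
      braid_comm_rel (⟨k, hk⟩ : Fin (n-1)) ⟨l, hl⟩ h]
  have hbraid : ∀ k, k + 1 < n - 1 → a k * a (k+1) * a k = a (k+1) * a k * a (k+1) := by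
    intro k h
    have hk : k < n - 1 := by omega
    rw [haval k hk, haval (k+1) h, ← map_mul, ← map_mul, ← map_mul, ← map_mul,
      braid_braid_rel (⟨k, hk⟩ : Fin (n-1)) ⟨k+1, h⟩ rfl]
  -- Step 1 : noncyclicity gives `a 0 ≠ a 2`.
  have ha02 : a 0 ≠ a 2 := by
    intro h02
    apply hf
    have key : ∀ k, 2 ≤ k → k < n - 1 → a k = a 0 := by
      intro k hk2
      induction k, hk2 using Nat.le_induction with
      | base => intro _; exact h02.symm
      | succ k hk ih =>
        intro h
        have hk1 : k < n - 1 := by omega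
        have e := hbraid k h
        rw [ih hk1] at e
        have c : a 0 * a (k+1) = a (k+1) * a 0 := hcomm 0 (k+1) (by omega) h
        rw [c] at e
        exact (mul_left_cancel e).symm
    have h3 : a 3 = a 0 := key 3 (by omega) (by omega)
    have h1 : a 1 = a 0 := by
      have e := hbraid 0 (by omega)
      have c : a 1 * a 3 = a 3 * a 1 := hcomm 1 3 (by omega) (by omega)
      rw [h3] at c
      rw [← c] at e
      exact (mul_left_cancel e).symm
    have hall : ∀ (kk : Fin (n-1)), f (braidGen n kk) = a 0 := by
      intro kk
      have hv : a kk.1 = f (braidGen n kk) := by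
        rw [haval kk.1 kk.2]
      rw [← hv]
      rcases kk with ⟨k, hklt⟩
      match k with
      | 0 => rfl
      | 1 => exact h1
      | (k+2) => exact key (k+2) (by omega) hklt
    refine ⟨zpowersHom G (a 0), ?_⟩
    have heq : f = (zpowersHom G (a 0)).comp (braidAbel n) := by
      apply braidGroup_hom_ext
      intro kk
      rw [MonoidHom.comp_apply, braidAbel_gen, hall kk, zpowersHom_apply]
      simp
    intro x
    rw [heq]
    rfl
  -- Step 2 : setup of the totally symmetric set.
  obtain ⟨k, hk⟩ : ∃ k, n / 2 = k + 1 := ⟨n/2 - 1, by omega⟩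
  have hk1 : 1 ≤ k := by omega
  have hm : ∀ i : Fin (k+1), 2 * (i:ℕ) < n - 1 := by
    intro i
    have := i.isLt
    omega
  set x : Fin (k+1) → G := fun i => a (2*(i:ℕ)) with hx
  have hxc : ∀ i j, Commute (x i) (x j) := by
    intro i j
    rcases lt_trichotomy (i:ℕ) (j:ℕ) with h|h|h
    · exact hcomm (2*(i:ℕ)) (2*(j:ℕ)) (by omega) (hm j)
    · rw [Fin.ext h]
    · exact (hcomm (2*(j:ℕ)) (2*(i:ℕ)) (by omega) (hm i)).symm
  -- swap realizers for adjacent transpositions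
  have hswap : ∀ (i : ℕ) (hi : i + 1 < k + 1), ∃ g : G,
      ∀ p : Fin (k+1), g * x p * g⁻¹ = x (Equiv.swap ⟨i, by omega⟩ ⟨i+1, hi⟩ p) := by
    intro i hi
    have h2i2 : 2*i + 2 < n - 1 := by omega
    have h1 : a (2*i) * a (2*i+1) * a (2*i) = a (2*i+1) * a (2*i) * a (2*i+1) :=
      hbraid (2*i) (by omega)
    have h2 : a (2*i+1) * a (2*i+2) * a (2*i+1) = a (2*i+2) * a (2*i+1) * a (2*i+2) :=
      hbraid (2*i+1) (by omega)
    have h3 : a (2*i) * a (2*i+2) = a (2*i+2) * a (2*i) :=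
      hcomm (2*i) (2*i+2) (by omega) h2i2
    obtain ⟨e1, e2⟩ := braid_swap_conj (a (2*i)) (a (2*i+1)) (a (2*i+2)) h1 h2 h3
    set w : G := a (2*i+1) * a (2*i) * a (2*i+2) * a (2*i+1) with hw
    refine ⟨w, ?_⟩
    intro p
    rcases eq_or_ne p ⟨i, by omega⟩ with rfl|hp1
    · rw [Equiv.swap_apply_left]
      have hxi : x ⟨i, by omega⟩ = a (2*i) := rfl
      have hxi1 : x ⟨i+1, hi⟩ = a (2*i+2) := by
        show a (2*(i+1)) = a (2*i+2)
        exact congrArg a (by omega)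
      rw [hxi, hxi1]
      exact e1
    rcases eq_or_ne p ⟨i+1, hi⟩ with rfl|hp2
    · rw [Equiv.swap_apply_right]
      have hxi : x ⟨i, by omega⟩ = a (2*i) := rfl
      have hxi1 : x ⟨i+1, hi⟩ = a (2*i+2) := by
        show a (2*(i+1)) = a (2*i+2)
        exact congrArg a (by omega)
      rw [hxi, hxi1]
      exact e2
    · rw [Equiv.swap_apply_of_ne_of_ne hp1 hp2]
      -- x p commutes with each factor of w
      have hfar : ∀ l, l < n - 1 → (l + 2 ≤ 2*(p:ℕ) ∨ 2*(p:ℕ) + 2 ≤ l) → a l * x p = x p * a l := by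
        intro l hl hcase
        rcases hcase with hcase|hcase
        · exact (hcomm l (2*(p:ℕ)) hcase (hm p)).symm ▸ (hcomm l (2*(p:ℕ)) hcase (hm p))
        · exact (hcomm (2*(p:ℕ)) l hcase hl).symm
      have hpi : (p:ℕ) ≠ i := fun h => hp1 (Fin.ext h)
      have hpi1 : (p:ℕ) ≠ i+1 := fun h => hp2 (Fin.ext h)
      have c1 : a (2*i) * x p = x p * a (2*i) := by
        refine hfar (2*i) (by omega) (by omega)
      have c2 : a (2*i+1) * x p = x p * a (2*i+1) := by
        refine hfar (2*i+1) (by omega) (by omega)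
      have c3 : a (2*i+2) * x p = x p * a (2*i+2) := by
        refine hfar (2*i+2) h2i2 (by omega)
      have : w * x p = x p * w := by
        rw [hw]
        calc a (2*i+1) * a (2*i) * a (2*i+2) * a (2*i+1) * x p
            = a (2*i+1) * a (2*i) * a (2*i+2) * (a (2*i+1) * x p) := by group
          _ = a (2*i+1) * a (2*i) * (a (2*i+2) * x p) * a (2*i+1) := by rw [c2]; group
          _ = a (2*i+1) * (a (2*i) * x p) * a (2*i+2) * a (2*i+1) := by rw [c3]; group
          _ = (a (2*i+1) * x p) * a (2*i) * a (2*i+2) * a (2*i+1) := by rw [c1]; group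
          _ = x p * (a (2*i+1) * a (2*i) * a (2*i+2) * a (2*i+1)) := by rw [c2]; group
      rw [this, mul_inv_cancel_right]
  -- the subgroup of realizable permutations
  set T : Subgroup (Equiv.Perm (Fin (k+1))) :=
    { carrier := {π | ∃ g : G, ∀ p, g * x p * g⁻¹ = x (π p)}
      one_mem' := ⟨1, fun p => by simp⟩
      mul_mem' := by
        rintro π ρ ⟨g, hg⟩ ⟨h, hh⟩
        refine ⟨g*h, fun p => ?_⟩
        have : (g*h) * x p * (g*h)⁻¹ = g * (h * x p * h⁻¹) * g⁻¹ := by group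
        rw [this, hh p, hg (ρ p)]
        rfl
      inv_mem' := by
        rintro π ⟨g, hg⟩
        refine ⟨g⁻¹, fun p => ?_⟩
        have := hg (π⁻¹ p)
        rw [← Equiv.Perm.mul_apply, mul_inv_cancel, Equiv.Perm.one_apply] at this
        rw [← this]
        group } with hT
  have hadj : ∀ (i : ℕ) (hi : i + 1 < k+1), Equiv.swap ⟨i, by omega⟩ ⟨i+1, hi⟩ ∈ T :=
    fun i hi => hswap i hi
  have hswapall : ∀ (d : ℕ) (u v : Fin (k+1)), (v:ℕ) = (u:ℕ) + d → Equiv.swap u v ∈ T := by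
    intro d
    induction d with
    | zero =>
      intro u v h
      have : u = v := Fin.ext (by omega)
      rw [this, Equiv.swap_self]
      exact T.one_mem
    | succ d ih =>
      intro u v h
      have hv := v.isLt
      rcases Nat.eq_zero_or_pos d with rfl|hd
      · have heq : v = ⟨(u:ℕ)+1, by omega⟩ :=
          Fin.ext ((by omega : (v:ℕ) = (u:ℕ)+1))
        rw [heq]
        exact hadj u.1 (by omega)
      · set wmid : Fin (k+1) := ⟨(u:ℕ) + d, by omega⟩ with hwmid
        have hw : Equiv.swap u wmid ∈ T := ih u wmid rfl
        have hwv : Equiv.swap wmid v ∈ T := by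
          have heq : v = ⟨(u:ℕ)+d+1, by omega⟩ :=
            Fin.ext ((by omega : (v:ℕ) = (u:ℕ)+d+1))
          rw [heq]
          exact hadj ((u:ℕ)+d) (by omega)
        have huw : Equiv.swap wmid v u = u :=
          Equiv.swap_apply_of_ne_of_ne (fun hc => by simp [hwmid, Fin.ext_iff] at hc; omega)
            (fun hc => by rw [hc] at h; omega)
        have hww : Equiv.swap wmid v wmid = v := Equiv.swap_apply_left _ _
        have hform : Equiv.swap u v = Equiv.swap wmid v * Equiv.swap u wmid * (Equiv.swap wmid v)⁻¹ := by
          rw [← Equiv.swap_apply_apply (Equiv.swap wmid v) u wmid, huw, hww]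
        rw [hform]
        exact T.mul_mem (T.mul_mem hwv hw) (T.inv_mem hwv)
  have hTtop : ∀ π : Equiv.Perm (Fin (k+1)), π ∈ T := by
    have hsw : {σ : Equiv.Perm (Fin (k+1)) | σ.IsSwap} ⊆ (T : Set (Equiv.Perm (Fin (k+1)))) := by
      rintro σ ⟨u, v, huv, rfl⟩
      rcases le_or_gt (u:ℕ) (v:ℕ) with hle|hlt
      · exact hswapall ((v:ℕ) - (u:ℕ)) u v (by omega)
      · rw [Equiv.swap_comm]
        exact hswapall ((u:ℕ) - (v:ℕ)) v u (by omega)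
    have : (⊤ : Subgroup (Equiv.Perm (Fin (k+1)))) ≤ T := by
      rw [← Equiv.Perm.closure_isSwap]
      exact (Subgroup.closure_le T).mpr hsw
    exact fun π => this (Subgroup.mem_top π)
  have hperm : ∀ π : Equiv.Perm (Fin (k+1)), ∃ g : G, ∀ p, g * x p * g⁻¹ = x (π p) :=
    fun π => hTtop π
  -- injectivity of x
  have hinj : Function.Injective x := by
    intro i j hij
    by_contra hne
    set z0 : Fin (k+1) := ⟨0, by omega⟩
    set z1 : Fin (k+1) := ⟨1, by omega⟩
    have hz01 : z0 ≠ z1 := by simp [Fin.ext_iff]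
    set π₁ := Equiv.swap i z0 with hπ₁
    set j' := π₁ j with hj'
    have hj'0 : j' ≠ z0 := by
      intro hc
      apply hne
      have : π₁ j = π₁ i := by rw [← hj', hc, hπ₁, Equiv.swap_apply_left]
      exact (π₁.injective this).symm
    set π₂ := Equiv.swap j' z1 with hπ₂
    obtain ⟨g, hg⟩ := hperm (π₂ * π₁)
    have e1 : (π₂ * π₁) i = z0 := by
      have : π₁ i = z0 := Equiv.swap_apply_left _ _
      simp only [Equiv.Perm.mul_apply, this]
      exact Equiv.swap_apply_of_ne_of_ne (Ne.symm hj'0) hz01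
    have e2 : (π₂ * π₁) j = z1 := by
      simp only [Equiv.Perm.mul_apply, ← hj']
      exact Equiv.swap_apply_left _ _
    have : x z0 = x z1 := by
      rw [← e1, ← e2, ← hg i, ← hg j, hij]
    have hxz0 : x z0 = a 0 := rfl
    have hxz1 : x z1 = a 2 := rfl
    exact ha02 (by rw [← hxz0, ← hxz1, this])
  -- conclude
  have hfinal := totally_symmetric_card x hxc hinj hperm
  rw [hk]
  simpa using hfinal
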